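/- Let π be an 𝓔-measurable quasi-probability kernel. The following statements are equivalent: (1) π is a normal 𝓔-measurable kernel; (2) π is an adapted 𝓔-measurable kernel and π(x, Δ^π_x) = 1 for each x ∈ S_π; (3) π is an adapted 𝓔-measurable kernel and proper as an 𝓝_π-measurable kernel; (4) π is proper as an 𝓔_π-measurable kernel and J_{𝓔_π}(π) = J_𝓔(π), where 𝓔_π = 𝓔 ∩ 𝓝_π; (5) π is proper as an 𝓢_π-measurable kernel and J_{𝓢_π}(π) = J_𝓔(π). -/

import Mathlib

open MeasureTheory
open scoped ENNReal

variable {X : Type*}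

/-- A quasi-probability kernel on `(X, mX)`: `π(·,F)` is `mX`-measurable for each
`mX`-measurable `F`, and each `π(x,·)` is a measure with total mass `0` or `1`. -/
def IsQPK (mX : MeasurableSpace X) (π : X → @Measure X mX) : Prop :=
  (∀ F : Set X, MeasurableSet[mX] F → Measurable[mX] fun x => π x F) ∧
    (∀ x : X, π x Set.univ = 0 ∨ π x Set.univ = 1)

/-- The support `S_π = {x : π(x,X) = 1}` of a quasi-probability kernel. -/
def qpkSupp (mX : MeasurableSpace X) (π : X → @Measure X mX) : Set X :=
  {x | π x Set.univ = 1}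

/-- `π` is `𝓔`-measurable: `π(·,F)` is `𝓔`-measurable for each `mX`-measurable `F`. -/
def EMeasK (mX 𝓔 : MeasurableSpace X) (π : X → @Measure X mX) : Prop :=
  ∀ F : Set X, MeasurableSet[mX] F → Measurable[𝓔] fun x => π x F

/-- `J_𝓔(π)`: the set of probability measures `μ` on `(X, mX)` with
`μ(E ∩ F) = ∫_E π(·,F) dμ` for all `E ∈ 𝓔` and `F ∈ mX`. -/
def J (mX 𝓔 : MeasurableSpace X) (π : X → @Measure X mX) : Set (@Measure X mX) :=
  {μ | IsProbabilityMeasure μ ∧ ∀ E F : Set X, MeasurableSet[𝓔] E → MeasurableSet[mX] F →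
      μ (E ∩ F) = ∫⁻ x in E, π x F ∂μ}

/-- `J_⋆(π)`: the set of probability measures `μ` on `(X, mX)` with
`μ(F) = ∫ π(·,F) dμ` for all `F ∈ mX`. -/
def Jstar (mX : MeasurableSpace X) (π : X → @Measure X mX) : Set (@Measure X mX) :=
  {μ | IsProbabilityMeasure μ ∧ ∀ F : Set X, MeasurableSet[mX] F → μ F = ∫⁻ x, π x F ∂μ}

/-- `π` is proper as an `𝓔`-measurable kernel: `π(x, E ∩ F) = 1_E(x)·π(x,F)` for all
`E ∈ 𝓔`, `F ∈ mX` and `x ∈ X`. -/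
def IsProperK (mX 𝓔 : MeasurableSpace X) (π : X → @Measure X mX) : Prop :=
  ∀ E F : Set X, MeasurableSet[𝓔] E → MeasurableSet[mX] F → ∀ x : X,
    π x (E ∩ F) = Set.indicator E (fun _ => π x F) x

/-- `μ` is trivial on `𝓔` if `μ(E) ∈ {0,1}` for every `E ∈ 𝓔`. -/
def IsTrivialOn (mX 𝓔 : MeasurableSpace X) (μ : @Measure X mX) : Prop :=
  ∀ E : Set X, MeasurableSet[𝓔] E → μ E = 0 ∨ μ E = 1

/-- `π` is adapted if `π(x,·) ∈ J_𝓔(π)` for every `x ∈ S_π`. -/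
def IsAdaptedK (mX 𝓔 : MeasurableSpace X) (π : X → @Measure X mX) : Prop :=
  ∀ x ∈ qpkSupp mX π, π x ∈ J mX 𝓔 π

/-- `π` is normal if it is adapted and `π(x,·)` is trivial on `𝓔` for every `x ∈ S_π`. -/
def IsNormalK (mX 𝓔 : MeasurableSpace X) (π : X → @Measure X mX) : Prop :=
  IsAdaptedK mX 𝓔 π ∧ ∀ x ∈ qpkSupp mX π, IsTrivialOn mX 𝓔 (π x)

/-- The restriction of `π` to `D`: the kernel `ρ(x,F) = 1_D(x)·π(x,F)`. -/
noncomputable def kerRestrict (mX : MeasurableSpace X) (π : X → @Measure X mX) (D : Set X) :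
    X → @Measure X mX :=
  Set.indicator D π

/-- `ρ` is a refinement of `π`: an `𝓔`-measurable quasi-probability kernel which is the
restriction of `π` to some `D ∈ 𝓔` and satisfies `J_𝓔(ρ) = J_𝓔(π)`. -/
def IsRefinement (mX 𝓔 : MeasurableSpace X) (π ρ : X → @Measure X mX) : Prop :=
  IsQPK mX ρ ∧ EMeasK mX 𝓔 ρ ∧ (∃ D : Set X, MeasurableSet[𝓔] D ∧ ρ = kerRestrict mX π D) ∧
    J mX 𝓔 ρ = J mX 𝓔 π

/-- `Δ^π_μ = {x ∈ S_π : π(x,·) = μ}`. -/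
def DeltaM (mX : MeasurableSpace X) (π : X → @Measure X mX) (μ : @Measure X mX) : Set X :=
  {x ∈ qpkSupp mX π | π x = μ}

/-- `Δ^π_x = {y ∈ S_π : π(y,·) = π(x,·)}`. -/
def Delta (mX : MeasurableSpace X) (π : X → @Measure X mX) (x : X) : Set X :=
  {y ∈ qpkSupp mX π | π y = π x}

/-- `𝓝_π`: the σ-algebra of `mX`-measurable sets `N` such that for every `x ∈ S_π` either
`Δ^π_x ⊆ N` or `Δ^π_x ∩ N = ∅`. -/
def NSigma (mX : MeasurableSpace X) (π : X → @Measure X mX) : MeasurableSpace X where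
  MeasurableSet' N := MeasurableSet[mX] N ∧
    ∀ x ∈ qpkSupp mX π, Delta mX π x ⊆ N ∨ Delta mX π x ∩ N = ∅
  measurableSet_empty :=
    ⟨@MeasurableSet.empty X mX, fun _ _ => Or.inr (Set.inter_empty _)⟩
  measurableSet_compl := by
    rintro N ⟨hN, h⟩
    refine ⟨hN.compl, fun x hx => ?_⟩
    rcases h x hx with h1 | h1
    · refine Or.inr ?_
      ext y
      simp only [Set.mem_inter_iff, Set.mem_compl_iff, Set.mem_empty_iff_false, iff_false,
        not_and, not_not]
      exact fun hy => h1 hy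
    · exact Or.inl fun y hy hyN => (Set.eq_empty_iff_forall_notMem.1 h1) y ⟨hy, hyN⟩
  measurableSet_iUnion := by
    intro f hf
    refine ⟨MeasurableSet.iUnion fun i => (hf i).1, fun x hx => ?_⟩
    by_cases hc : ∃ i, Delta mX π x ⊆ f i
    · rcases hc with ⟨i, hi⟩
      exact Or.inl (hi.trans (Set.subset_iUnion f i))
    · push_neg at hc
      refine Or.inr ?_
      ext y
      simp only [Set.mem_inter_iff, Set.mem_iUnion, Set.mem_empty_iff_false, iff_false, not_and]
      rintro hy ⟨i, hyi⟩
      rcases (hf i).2 x hx with h1 | h1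
      · exact hc i h1
      · exact (Set.eq_empty_iff_forall_notMem.1 h1) y ⟨hy, hyi⟩

/-- `𝓢_π`: the least σ-algebra making all the functions `π(·,F)`, `F ∈ mX`, measurable,
i.e. the σ-algebra generated by these functions. -/
def Spi (mX : MeasurableSpace X) (π : X → @Measure X mX) : MeasurableSpace X :=
  ⨆ F ∈ {F : Set X | MeasurableSet[mX] F},
    MeasurableSpace.comap (fun x => π x F) inferInstance

/-!
Everything is compared with (2). Because `𝓕` is countably generated, probability measures are
determined by their values on countably many sets, so `Δ^π_x` is a countable intersection of
level sets of the functions `π(·,F)` and lies in every σ-algebra making `π` measurable, in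
particular in `𝓢_π ⊆ 𝓔 ∩ 𝓝_π`. If `π(x,·)` is adapted and trivial on `𝓔`, each `𝓔`-measurable
`π(·,F)` is `π(x,·)`-a.e. constant, the constant being `π(x,F)`; hence `π(x,Δ^π_x) = 1`.
Conversely concentration on `Δ^π_x` forces `π(x,E) = π(x,E)²` for `E ∈ 𝓔`, and it is exactly
properness on `𝓝_π`. Properness on `𝓓` makes `π(x,·)` a point mass on `𝓓`, which gives
adaptedness, while for normal `π` every `E ∈ 𝓔` agrees a.e. with the `𝓓`-set `{π(·,E) = 1}`
under any `μ ∈ J_𝓓(π)`, which gives `J_𝓓(π) ⊆ J_𝓔(π)`.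
-/

namespace MeasurableSpace

theorem exists_countable_determining_class [MeasurableSpace X] [CountablyGenerated X] :
    ∃ C : Set (Set X), C.Countable ∧ (∀ s ∈ C, MeasurableSet s) ∧
      ∀ (μ ν : Measure X) [IsFiniteMeasure μ], μ Set.univ = ν Set.univ →
        (∀ s ∈ C, μ s = ν s) → μ = ν := by
  have hgen : generateFrom (piiUnionInter (fun n => {natGeneratingSequence X n}) Set.univ) =
      ‹MeasurableSpace X› := by
    rw [generateFrom_piiUnionInter_singleton_left]
    convert generateFrom_natGeneratingSequence X using 2
    simp [Set.range]
  refine ⟨_, ?_, fun t ht => hgen ▸ measurableSet_generateFrom ht, fun μ ν _ huniv hC =>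
    ext_of_generate_finite _ hgen.symm
      (isPiSystem_piiUnionInter _ (fun _ => IsPiSystem.singleton _) _) hC huniv⟩
  rw [piiUnionInter_singleton_left]
  refine (Set.countable_range fun t : Finset ℕ => ⋂ i ∈ t, natGeneratingSequence X i).mono ?_
  rintro _ ⟨t, -, rfl⟩
  exact ⟨t, rfl⟩

end MeasurableSpace

section Kernel

open MeasurableSpace Set

-- `mX` comes last so that instance resolution prefers it to the other σ-algebras in scope.
variable {𝓓 𝓔 : MeasurableSpace X} [mX : MeasurableSpace X] {π : X → Measure X} {x : X}

theorem IsQPK.eq_zero_of_notMem (hπ : IsQPK mX π) (hx : x ∉ qpkSupp mX π) : π x = 0 :=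
  Measure.measure_univ_eq_zero.mp ((hπ.2 x).resolve_right hx)

theorem isProbabilityMeasure_of_mem_qpkSupp (hx : x ∈ qpkSupp mX π) :
    IsProbabilityMeasure (π x) :=
  ⟨hx⟩

theorem measurableSet_level (hπ : EMeasK mX 𝓓 π) {F : Set X} (hF : MeasurableSet F) (c : ℝ≥0∞) :
    MeasurableSet[𝓓] {y | π y F = c} :=
  hπ F hF (measurableSet_singleton c)

theorem EMeasK.inf (h₁ : EMeasK mX 𝓓 π) (h₂ : EMeasK mX 𝓔 π) : EMeasK mX (𝓓 ⊓ 𝓔) π :=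
  fun F hF _ hs => measurableSet_inf.2 ⟨h₁ F hF hs, h₂ F hF hs⟩

theorem eMeasK_spi : EMeasK mX (Spi mX π) π := fun F hF =>
  measurable_iff_comap_le.mpr <| le_iSup₂ (f := fun F (_ : F ∈ {F : Set X | MeasurableSet F}) =>
    MeasurableSpace.comap (fun x => π x F) inferInstance) F hF

theorem spi_le (hπ : EMeasK mX 𝓓 π) : Spi mX π ≤ 𝓓 :=
  iSup₂_le fun F hF => measurable_iff_comap_le.mp (hπ F hF)

theorem IsQPK.eMeasK_nSigma (hπ : IsQPK mX π) : EMeasK mX (NSigma mX π) π := by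
  intro F hF B hB
  refine ⟨hπ.1 F hF hB, fun z _ => ?_⟩
  by_cases hzB : π z F ∈ B
  · exact Or.inl fun y hy => show π y F ∈ B by rw [hy.2]; exact hzB
  · refine Or.inr (eq_empty_iff_forall_notMem.2 ?_)
    rintro y ⟨⟨-, hyz⟩, hyB⟩
    exact hzB (hyz ▸ hyB)

theorem delta_eq_inter_biInter {C : Set (Set X)}
    (hC : ∀ (μ ν : Measure X) [IsFiniteMeasure μ], μ univ = ν univ →
      (∀ s ∈ C, μ s = ν s) → μ = ν)
    (hx : x ∈ qpkSupp mX π) :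
    Delta mX π x = qpkSupp mX π ∩ ⋂ F ∈ C, {y | π y F = π x F} := by
  ext y
  simp only [Delta, mem_ofPred_eq, mem_inter_iff, mem_iInter]
  refine ⟨fun ⟨hyS, hyx⟩ => ⟨hyS, fun F _ => by rw [hyx]⟩, fun ⟨hyS, hyx⟩ => ⟨hyS, ?_⟩⟩
  have := isProbabilityMeasure_of_mem_qpkSupp hyS
  exact hC _ _ (hyS.trans hx.symm) hyx

theorem measurableSet_delta [CountablyGenerated X] (hπ : EMeasK mX 𝓓 π)
    (hx : x ∈ qpkSupp mX π) : MeasurableSet[𝓓] (Delta mX π x) := by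
  obtain ⟨C, hCc, hCm, hC⟩ := exists_countable_determining_class (X := X)
  rw [delta_eq_inter_biInter hC hx]
  exact (measurableSet_level hπ MeasurableSet.univ 1).inter
    (.biInter hCc fun F hF => measurableSet_level hπ (hCm F hF) _)

theorem IsQPK.measurableSet_nSigma_delta [CountablyGenerated X] (hπ : IsQPK mX π)
    (hx : x ∈ qpkSupp mX π) : MeasurableSet[NSigma mX π] (Delta mX π x) := by
  refine ⟨measurableSet_delta hπ.1 hx, fun z _ => ?_⟩
  by_cases hzx : π z = π x
  · exact Or.inl fun y hy => ⟨hy.1, hy.2.trans hzx⟩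
  · refine Or.inr (eq_empty_iff_forall_notMem.2 ?_)
    rintro y ⟨⟨-, hyz⟩, -, hyx⟩
    exact hzx (hyz.symm.trans hyx)

theorem ae_mem_delta_of_apply_delta_eq_one [CountablyGenerated X] (hπ : IsQPK mX π)
    (hx : x ∈ qpkSupp mX π) (hΔ : π x (Delta mX π x) = 1) :
    ∀ᵐ y ∂π x, y ∈ Delta mX π x :=
  have := isProbabilityMeasure_of_mem_qpkSupp hx
  (mem_ae_iff_prob_eq_one (measurableSet_delta hπ.1 hx)).2 hΔ

theorem IsProperK.mono (h : 𝓓 ≤ 𝓔) (hp : IsProperK mX 𝓔 π) : IsProperK mX 𝓓 π :=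
  fun E F hE hF => hp E F (h _ hE) hF

theorem IsProperK.apply_eq_indicator (hp : IsProperK mX 𝓓 π) {D : Set X}
    (hD : MeasurableSet[𝓓] D) (hx : x ∈ qpkSupp mX π) : π x D = D.indicator 1 x := by
  have h := hp D univ hD MeasurableSet.univ x
  rw [inter_univ] at h
  by_cases hxD : x ∈ D <;> simp_all [qpkSupp]

theorem IsProperK.apply_delta (hp : IsProperK mX 𝓓 π) (hΔ : MeasurableSet[𝓓] (Delta mX π x))
    (hx : x ∈ qpkSupp mX π) : π x (Delta mX π x) = 1 := by
  rw [hp.apply_eq_indicator hΔ hx, indicator_of_mem (show x ∈ Delta mX π x from ⟨hx, rfl⟩),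
    Pi.one_apply]

theorem IsProperK.mem_J (h𝓓 : 𝓓 ≤ mX) (hπ : EMeasK mX 𝓓 π) (hp : IsProperK mX 𝓓 π)
    (hx : x ∈ qpkSupp mX π) : π x ∈ J mX 𝓓 π := by
  have := isProbabilityMeasure_of_mem_qpkSupp hx
  refine ⟨inferInstance, fun D F hD hF => ?_⟩
  have hlevel : ∀ᵐ y ∂π x, π y F = π x F := by
    have hL := measurableSet_level hπ hF (π x F)
    refine (mem_ae_iff_prob_eq_one (h𝓓 _ hL)).2 ?_
    rw [hp.apply_eq_indicator hL hx, indicator_of_mem (by exact rfl), Pi.one_apply]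
  rw [hp D F hD hF x, setLIntegral_congr_fun_ae (h𝓓 _ hD) (hlevel.mono fun y hy _ => hy),
    setLIntegral_const, hp.apply_eq_indicator hD hx]
  by_cases hxD : x ∈ D <;> simp [hxD]

theorem IsTrivialOn.ae_eq_const {μ : Measure X} [IsProbabilityMeasure μ]
    (hμ : IsTrivialOn mX 𝓓 μ) (h𝓓 : 𝓓 ≤ mX)
    {β : Type*} [MeasurableSpace β] [Nonempty β] [CountablySeparated β]
    {f : X → β} (hf : Measurable[𝓓] f) : ∃ c, f =ᵐ[μ] Function.const X c :=
  Filter.exists_eventuallyEq_const_of_forall_separating MeasurableSet fun _ hU =>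
    (hμ _ (hf hU)).symm.imp (mem_ae_iff_prob_eq_one (h𝓓 _ (hf hU))).2
      measure_eq_zero_iff_ae_notMem.1

theorem ae_apply_eq_of_mem_J_of_isTrivialOn (h𝓔 : 𝓔 ≤ mX) (hπ : EMeasK mX 𝓔 π)
    (hx : x ∈ qpkSupp mX π) (hJ : π x ∈ J mX 𝓔 π) (htriv : IsTrivialOn mX 𝓔 (π x))
    {F : Set X} (hF : MeasurableSet F) : ∀ᵐ y ∂π x, π y F = π x F := by
  have := isProbabilityMeasure_of_mem_qpkSupp hx
  obtain ⟨c, hc⟩ := htriv.ae_eq_const h𝓔 (hπ F hF)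
  have hcF : c = π x F := by
    calc c = ∫⁻ y, π y F ∂π x := by
          rw [lintegral_congr_ae hc]
          simp only [Function.const_apply, lintegral_const, measure_univ, mul_one]
      _ = π x F := by simpa using (hJ.2 univ F .univ hF).symm
  exact hc.mono fun y hy => hy.trans hcF

theorem apply_delta_eq_one_of_mem_J_of_isTrivialOn [CountablyGenerated X]
    (h𝓔 : 𝓔 ≤ mX) (hπ : IsQPK mX π) (hπE : EMeasK mX 𝓔 π) (hx : x ∈ qpkSupp mX π)
    (hJ : π x ∈ J mX 𝓔 π) (htriv : IsTrivialOn mX 𝓔 (π x)) : π x (Delta mX π x) = 1 := by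
  have := isProbabilityMeasure_of_mem_qpkSupp hx
  obtain ⟨C, hCc, hCm, hC⟩ := exists_countable_determining_class (X := X)
  have hlevel {F : Set X} (hF : MeasurableSet F) : ∀ᵐ y ∂π x, π y F = π x F :=
    ae_apply_eq_of_mem_J_of_isTrivialOn h𝓔 hπE hx hJ htriv hF
  rw [← mem_ae_iff_prob_eq_one (measurableSet_delta hπ.1 hx), delta_eq_inter_biInter hC hx]
  filter_upwards [hlevel MeasurableSet.univ, (ae_ball_iff hCc).2 fun F hF => hlevel (hCm F hF)]
    with y hyS hyC
  exact ⟨hyS.trans hx, mem_iInter₂.2 hyC⟩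

/-- On the full-measure set `Δ_x` the value `c = π(x,E)` is constant, so adaptedness gives
`c = ∫_E c dπ(x,·) = c²`. -/
theorem isTrivialOn_of_mem_J_of_ae_mem_delta (h𝓔 : 𝓔 ≤ mX) (hx : x ∈ qpkSupp mX π)
    (hJ : π x ∈ J mX 𝓔 π) (hΔ : ∀ᵐ y ∂π x, y ∈ Delta mX π x) : IsTrivialOn mX 𝓔 (π x) := by
  have := isProbabilityMeasure_of_mem_qpkSupp hx
  intro E hE
  have hsq : π x E * π x E = π x E * 1 := by
    calc π x E * π x E = ∫⁻ _ in E, π x E ∂π x := (setLIntegral_const _ _).symm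
      _ = ∫⁻ y in E, π y E ∂π x :=
          setLIntegral_congr_fun_ae (h𝓔 _ hE) (hΔ.mono fun y hy _ => by rw [hy.2])
      _ = π x E * 1 := by rw [← hJ.2 E E hE (h𝓔 _ hE), inter_self, mul_one]
  by_cases h0 : π x E = 0
  · exact Or.inl h0
  · exact Or.inr ((ENNReal.mul_right_inj h0 (measure_ne_top _ _)).1 hsq)

theorem isNormalK_iff [CountablyGenerated X] (h𝓔 : 𝓔 ≤ mX) (hπ : IsQPK mX π)
    (hπE : EMeasK mX 𝓔 π) :
    IsNormalK mX 𝓔 π ↔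
      IsAdaptedK mX 𝓔 π ∧ ∀ x ∈ qpkSupp mX π, π x (Delta mX π x) = 1 :=
  and_congr_right fun had => forall₂_congr fun x hx =>
    ⟨apply_delta_eq_one_of_mem_J_of_isTrivialOn h𝓔 hπ hπE hx (had x hx), fun hΔ =>
      isTrivialOn_of_mem_J_of_ae_mem_delta h𝓔 hx (had x hx)
        (ae_mem_delta_of_apply_delta_eq_one hπ hx hΔ)⟩

theorem isProperK_nSigma_iff [CountablyGenerated X] (hπ : IsQPK mX π) :
    IsProperK mX (NSigma mX π) π ↔ ∀ x ∈ qpkSupp mX π, π x (Delta mX π x) = 1 := by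
  refine ⟨fun hp x hx => hp.apply_delta (hπ.measurableSet_nSigma_delta hx) hx,
    fun hΔ N F hN _ x => ?_⟩
  by_cases hx : x ∈ qpkSupp mX π
  · have hae := ae_mem_delta_of_apply_delta_eq_one hπ hx (hΔ x hx)
    rcases hN.2 x hx with hsub | hdisj
    · rw [indicator_of_mem (hsub ⟨hx, rfl⟩), inter_comm, measure_inter_conull]
      exact measure_eq_zero_iff_ae_notMem.2 (hae.mono fun y hy hyN => hyN (hsub hy))
    · have hnot {y : X} (hy : y ∈ Delta mX π x) : y ∉ N := fun hyN => hdisj.subset ⟨hy, hyN⟩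
      rw [indicator_of_notMem (hnot ⟨hx, rfl⟩)]
      exact measure_eq_zero_iff_ae_notMem.2 (hae.mono fun y hy hyNF => hnot hy hyNF.1)
  · simp [hπ.eq_zero_of_notMem hx]

theorem J_antitone (h : 𝓓 ≤ 𝓔) : J mX 𝓔 π ⊆ J mX 𝓓 π :=
  fun _ hμ => ⟨hμ.1, fun E F hE hF => hμ.2 E F (h _ hE) hF⟩

theorem IsQPK.ae_mem_qpkSupp_of_mem_J (hπ : IsQPK mX π) {μ : Measure X} (hμ : μ ∈ J mX 𝓓 π) :
    ∀ᵐ y ∂μ, y ∈ qpkSupp mX π := by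
  have := hμ.1
  have hS : MeasurableSet (qpkSupp mX π) := measurableSet_level hπ.1 .univ 1
  have hmass : (fun y => π y univ) = (qpkSupp mX π).indicator 1 := by
    funext y
    by_cases hy : y ∈ qpkSupp mX π
    · rw [indicator_of_mem hy]
      exact hy
    · simpa [hy] using (hπ.2 y).resolve_right hy
  refine (mem_ae_iff_prob_eq_one hS).2 ?_
  have h := hμ.2 univ univ .univ .univ
  rwa [univ_inter, measure_univ, Measure.restrict_univ, hmass, lintegral_indicator_one hS,
    eq_comm] at h

/-- Every `E ∈ 𝓔` agrees `μ`-a.e. with the `𝓓`-set `{y | π(y,E) = 1}`, because `π(·,E)` is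
the indicator of that set on the support. -/
theorem J_subset_J_of_isTrivialOn (h𝓔 : 𝓔 ≤ mX) (hπ : IsQPK mX π) (h𝓓 : 𝓓 ≤ mX)
    (hπ𝓓 : EMeasK mX 𝓓 π) (htriv : ∀ x ∈ qpkSupp mX π, IsTrivialOn mX 𝓔 (π x)) :
    J mX 𝓓 π ⊆ J mX 𝓔 π := by
  intro μ hμ
  have := hμ.1
  refine ⟨hμ.1, fun E F hE hF => ?_⟩
  set E' := {y | π y E = 1}
  have hE' : MeasurableSet[𝓓] E' := measurableSet_level hπ𝓓 (h𝓔 _ hE) 1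
  have hind : (fun y => π y E) =ᵐ[μ] E'.indicator 1 :=
    (hπ.ae_mem_qpkSupp_of_mem_J hμ).mono fun y hy => by
      rcases htriv y hy E hE with h | h <;> simp [E', h]
  have hcross {D : Set X} (hD : MeasurableSet[𝓓] D) : μ (D ∩ E) = μ (E' ∩ D) := by
    rw [hμ.2 D E hD (h𝓔 _ hE), lintegral_congr_ae (ae_restrict_of_ae hind),
      lintegral_indicator_one (h𝓓 _ hE'), Measure.restrict_apply (h𝓓 _ hE')]
  have hEE' : E =ᵐ[μ] E' := by
    have h₁ := hcross MeasurableSet.univ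
    have h₂ := hcross hE'
    rw [univ_inter, inter_univ] at h₁
    rw [inter_self] at h₂
    have hnull := ((h𝓓 _ hE').inter (h𝓔 _ hE)).nullMeasurableSet (μ := μ)
    exact (ae_eq_of_subset_of_measure_ge inter_subset_right (h₁.trans h₂.symm).le hnull
      (measure_ne_top _ _)).symm.trans
      (ae_eq_of_subset_of_measure_ge inter_subset_left h₂.symm.le hnull (measure_ne_top _ _))
  calc μ (E ∩ F) = μ (E' ∩ F) := measure_congr (hEE'.inter (ae_eq_refl F))
    _ = ∫⁻ y in E', π y F ∂μ := hμ.2 E' F hE' hF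
    _ = ∫⁻ y in E, π y F ∂μ := by rw [Measure.restrict_congr_set hEE']

theorem isAdaptedK_and_apply_delta_iff [CountablyGenerated X] (h𝓔 : 𝓔 ≤ mX)
    (hπ : IsQPK mX π) (hπ𝓓 : EMeasK mX 𝓓 π) (h𝓓𝓔 : 𝓓 ≤ 𝓔) (h𝓓N : 𝓓 ≤ NSigma mX π) :
    (IsAdaptedK mX 𝓔 π ∧ ∀ x ∈ qpkSupp mX π, π x (Delta mX π x) = 1) ↔
      IsProperK mX 𝓓 π ∧ J mX 𝓓 π = J mX 𝓔 π := by
  have h𝓓 : 𝓓 ≤ mX := h𝓓𝓔.trans h𝓔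
  constructor
  · rintro ⟨had, hΔ⟩
    have hnormal := (isNormalK_iff h𝓔 hπ (fun F hF => (hπ𝓓 F hF).mono h𝓓𝓔 le_rfl)).2 ⟨had, hΔ⟩
    exact ⟨((isProperK_nSigma_iff hπ).2 hΔ).mono h𝓓N,
      (J_subset_J_of_isTrivialOn h𝓔 hπ h𝓓 hπ𝓓 hnormal.2).antisymm (J_antitone h𝓓𝓔)⟩
  · rintro ⟨hp, hJ⟩
    exact ⟨fun x hx => hJ ▸ hp.mem_J h𝓓 hπ𝓓 hx,
      fun x hx => hp.apply_delta (measurableSet_delta hπ𝓓 hx) hx⟩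

end Kernel

/-- the five characterisations of normality are equivalent. -/
theorem stmt13 (mX : MeasurableSpace X) (hCG : @MeasurableSpace.CountablyGenerated X mX)
    (𝓔 : MeasurableSpace X) (h𝓔 : 𝓔 ≤ mX)
    (π : X → @Measure X mX) (hπ : IsQPK mX π) (hπE : EMeasK mX 𝓔 π) :
    List.TFAE [
      IsNormalK mX 𝓔 π,
      IsAdaptedK mX 𝓔 π ∧ ∀ x ∈ qpkSupp mX π, π x (Delta mX π x) = 1,
      IsAdaptedK mX 𝓔 π ∧ IsProperK mX (NSigma mX π) π,
      IsProperK mX (𝓔 ⊓ NSigma mX π) π ∧ J mX (𝓔 ⊓ NSigma mX π) π = J mX 𝓔 π,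
      IsProperK mX (Spi mX π) π ∧ J mX (Spi mX π) π = J mX 𝓔 π] := by
  -- `𝓔` is bound after `mX`, so `mX` has to be made the preferred instance again.
  let _ := mX
  have hN := hπ.eMeasK_nSigma
  tfae_have 1 ↔ 2 := isNormalK_iff h𝓔 hπ hπE
  tfae_have 2 ↔ 3 := and_congr_right fun _ => (isProperK_nSigma_iff hπ).symm
  tfae_have 2 ↔ 4 := isAdaptedK_and_apply_delta_iff h𝓔 hπ (hπE.inf hN) inf_le_left inf_le_right
  tfae_have 2 ↔ 5 := isAdaptedK_and_apply_delta_iff h𝓔 hπ eMeasK_spi (spi_le hπE) (spi_le hN)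
  tfae_finish
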